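/- For every n ≥ 1 and every integer k ≥ 2 there exists an integer m ≥ 1 such that the m-th power of the ideal M_2(A_n) (as a product of two-sided ideals) is contained in M_k(A_n). -/

import Mathlib

/-!
Modulo `M₃` the commutators `⁅a, x⁆` are central, and `⁅a, x⁆² = ⁅a, ⁅ax, x⁆⁆ - ⁅a, ⁅a, x⁆⁆x`
lies in `M₃`; polarizing in `a` (2 is invertible) gives `⁅p, x⁆⁅q, x⁆ ∈ M₃`. So the two-sided
ideal `J_x` generated by `⁅A, x⁆` squares into `M₃`. For generators `x₁, …, xₙ` the Leibniz rule
gives `M₂ = J_{x₁} + ⋯ + J_{xₙ}`, and a finite sum of two-sided ideals that are nilpotent modulo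
`M₃` is again nilpotent modulo `M₃`; hence `M₂ ^ m ⊆ M₃` for some `m`. Finally, a twelve-term
identity writes `⁅a, m⁆⁅b, ⁅c, d⁆⁆` through terms `p⁅y₁, ⁅y₂, m⁆⁆t`, which gives
`M_{j+1} M₃ ⊆ M_{j+2}` and therefore `M₃ ^ (k - 2) ⊆ M_k`.
-/

/-- Lower central series of an associative unital algebra `R` over `K`, as `K`-submodules:
`lowerCentral K R 1 = ⊤` and, for `i ≥ 1`, `lowerCentral K R (i+1)` is the `K`-linear span of
the brackets `⁅a, l⁆ = a * l - l * a` with `a : R` and `l ∈ lowerCentral K R i`.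
(By convention `lowerCentral K R 0 = ⊤` as well; only indices `i ≥ 1` are used.) -/
def lowerCentral (K : Type*) [CommRing K] (R : Type*) [Ring R] [Algebra K R] : ℕ → Submodule K R
  | 0 => ⊤
  | 1 => ⊤
  | n + 2 => Submodule.span K
      {x : R | ∃ a : R, ∃ l ∈ lowerCentral K R (n + 1), x = a * l - l * a}

/-- `lcsIdeal K R i` is the two-sided ideal `M_i(R)` of `R` generated by `lowerCentral K R i`,
realized as the `K`-submodule spanned by all products `a * l * b` with `a b : R` and
`l ∈ lowerCentral K R i`.  Products of such ideals are taken using the multiplication of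
`Submodule K R` (the span of pairwise products), which agrees with the product of
two-sided ideals. -/
def lcsIdeal (K : Type*) [CommRing K] (R : Type*) [Ring R] [Algebra K R] (i : ℕ) : Submodule K R :=
  Submodule.span K {x : R | ∃ a b : R, ∃ l ∈ lowerCentral K R i, x = a * l * b}

section TwoSided

variable {K : Type*} [CommRing K] {R : Type*} [Ring R] [Algebra K R]

def IsTwoSidedIdeal (I : Submodule K R) : Prop := ⊤ * I ≤ I ∧ I * ⊤ ≤ I

namespace IsTwoSidedIdeal

variable {I J M : Submodule K R}

lemma mul_le_left (hI : IsTwoSidedIdeal I) (X : Submodule K R) : X * I ≤ I :=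
  (mul_le_mul' le_top le_rfl).trans hI.1

lemma mul_le_right (hI : IsTwoSidedIdeal I) (X : Submodule K R) : I * X ≤ I :=
  (mul_le_mul' le_rfl le_top).trans hI.2

lemma mul_mem_left (hI : IsTwoSidedIdeal I) (a : R) {x : R} (hx : x ∈ I) : a * x ∈ I :=
  hI.1 (Submodule.mul_mem_mul Submodule.mem_top hx)

lemma mul_mem_right (hI : IsTwoSidedIdeal I) {x : R} (hx : x ∈ I) (b : R) : x * b ∈ I :=
  hI.2 (Submodule.mul_mem_mul hx Submodule.mem_top)

lemma sup (hI : IsTwoSidedIdeal I) (hJ : IsTwoSidedIdeal J) : IsTwoSidedIdeal (I ⊔ J) := by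
  constructor
  · rw [Submodule.mul_sup]; exact sup_le_sup hI.1 hJ.1
  · rw [Submodule.sup_mul]; exact sup_le_sup hI.2 hJ.2

lemma top_mul_mul_top_le (hI : IsTwoSidedIdeal I) {C : Submodule K R} (hC : C ≤ I) :
    ⊤ * C * ⊤ ≤ I :=
  (mul_le_mul' (mul_le_mul' le_rfl hC) le_rfl).trans ((mul_le_mul' hI.1 le_rfl).trans hI.2)

lemma sup_pow_le (hJ : IsTwoSidedIdeal J) (m : ℕ) : (I ⊔ J) ^ m ≤ I ^ m ⊔ J := by
  induction m with
  | zero => exact le_sup_left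
  | succ m ih =>
    calc (I ⊔ J) ^ (m + 1) ≤ (I ^ m ⊔ J) * (I ⊔ J) := by
          rw [pow_succ]; exact mul_le_mul' ih le_rfl
      _ = I ^ m * I ⊔ I ^ m * J ⊔ (J * I ⊔ J * J) := by
          rw [Submodule.sup_mul, Submodule.mul_sup, Submodule.mul_sup]
      _ ≤ I ^ (m + 1) ⊔ J := by
          rw [pow_succ]
          exact sup_le (sup_le_sup le_rfl (hJ.mul_le_left _))
            (le_sup_of_le_right (sup_le (hJ.mul_le_right _) (hJ.mul_le_right _)))

lemma sup_pow_two_mul_le (hM : IsTwoSidedIdeal M) (hJ : IsTwoSidedIdeal J) {m : ℕ}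
    (hIm : I ^ m ≤ M) (hJ2 : J ^ 2 ≤ M) : (I ⊔ J) ^ (2 * m) ≤ M := by
  calc (I ⊔ J) ^ (2 * m) ≤ (I ^ m ⊔ J) * (I ^ m ⊔ J) := by
        rw [mul_comm, pow_mul, sq]; exact mul_le_mul' (hJ.sup_pow_le m) (hJ.sup_pow_le m)
    _ = I ^ m * I ^ m ⊔ I ^ m * J ⊔ (J * I ^ m ⊔ J * J) := by
        rw [Submodule.sup_mul, Submodule.mul_sup, Submodule.mul_sup]
    _ ≤ M := by
        rw [← sq J]
        refine sup_le (sup_le ?_ ?_) (sup_le ?_ hJ2)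
        · exact (mul_le_mul' hIm le_rfl).trans (hM.mul_le_right _)
        · exact (mul_le_mul' hIm le_rfl).trans (hM.mul_le_right _)
        · exact (mul_le_mul' le_rfl hIm).trans (hM.mul_le_left _)

lemma exists_pow_finsetSup_le {ι : Type*} (s : Finset ι) {J : ι → Submodule K R}
    (hM : IsTwoSidedIdeal M) (hJ : ∀ i ∈ s, IsTwoSidedIdeal (J i))
    (hJ2 : ∀ i ∈ s, J i ^ 2 ≤ M) : ∃ m, 0 < m ∧ s.sup J ^ m ≤ M := by
  classical
  induction s using Finset.induction_on with
  | empty => exact ⟨1, one_pos, by simp⟩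
  | insert i s _ ih =>
    obtain ⟨m, hm, hsm⟩ := ih (fun j hj => hJ j (Finset.mem_insert_of_mem hj))
      (fun j hj => hJ2 j (Finset.mem_insert_of_mem hj))
    refine ⟨2 * m, by omega, ?_⟩
    rw [Finset.sup_insert, sup_comm]
    exact sup_pow_two_mul_le hM (hJ i (Finset.mem_insert_self i s)) hsm
      (hJ2 i (Finset.mem_insert_self i s))

lemma finsetSup {ι : Type*} (s : Finset ι) {J : ι → Submodule K R}
    (hJ : ∀ i ∈ s, IsTwoSidedIdeal (J i)) : IsTwoSidedIdeal (s.sup J) :=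
  Finset.sup_induction (p := IsTwoSidedIdeal) ⟨by simp, by simp⟩ (fun _ h₁ _ h₂ => h₁.sup h₂) hJ

lemma lie_mem_of_adjoin_eq_top (hI : IsTwoSidedIdeal I) {s : Set R}
    (hs : Algebra.adjoin K s = ⊤) (h : ∀ x ∈ s, ∀ a : R, ⁅a, x⁆ ∈ I) (a b : R) : ⁅a, b⁆ ∈ I := by
  induction (hs ▸ Algebra.mem_top : b ∈ Algebra.adjoin K s) using Algebra.adjoin_induction with
  | mem x hx => exact h x hx a
  | algebraMap r => simp [Ring.lie_def, Algebra.commutes]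
  | add x y _ _ hx hy =>
    convert add_mem hx hy using 1
    simp only [Ring.lie_def]; noncomm_ring
  | mul x y _ _ hx hy =>
    rw [show ⁅a, x * y⁆ = ⁅a, x⁆ * y + x * ⁅a, y⁆ by simp only [Ring.lie_def]; noncomm_ring]
    exact add_mem (hI.mul_mem_right hx y) (hI.mul_mem_left x hy)

end IsTwoSidedIdeal

lemma le_top_mul_mul_top (C : Submodule K R) : C ≤ ⊤ * C * ⊤ := fun c hc => by
  simpa using Submodule.mul_mem_mul
    (Submodule.mul_mem_mul (Submodule.mem_top : (1 : R) ∈ ⊤) hc) (Submodule.mem_top : (1 : R) ∈ ⊤)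

lemma top_mul_top : (⊤ : Submodule K R) * ⊤ = ⊤ :=
  top_le_iff.1 <| by
    simpa using mul_le_mul' (le_top : (1 : Submodule K R) ≤ ⊤) (le_refl (⊤ : Submodule K R))

lemma isTwoSidedIdeal_top_mul_mul_top (C : Submodule K R) : IsTwoSidedIdeal (⊤ * C * ⊤) := by
  constructor
  · rw [← mul_assoc, ← mul_assoc, top_mul_top]
  · rw [mul_assoc, top_mul_top]

end TwoSided

section LowerCentral

variable {K : Type*} [CommRing K] {R : Type*} [Ring R] [Algebra K R]

lemma lowerCentral_succ {j : ℕ} (hj : 1 ≤ j) :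
    lowerCentral K R (j + 1) =
      Submodule.span K {x | ∃ a : R, ∃ l ∈ lowerCentral K R j, x = ⁅a, l⁆} := by
  obtain ⟨i, rfl⟩ := Nat.exists_eq_add_of_le' hj
  simp only [Ring.lie_def]
  rfl

lemma lie_mem_lowerCentral {j : ℕ} (hj : 1 ≤ j) (a : R) {l : R}
    (hl : l ∈ lowerCentral K R j) : ⁅a, l⁆ ∈ lowerCentral K R (j + 1) := by
  rw [lowerCentral_succ hj]
  exact Submodule.subset_span ⟨a, l, hl, rfl⟩

lemma lie_mem_lowerCentral_two (a b : R) : ⁅a, b⁆ ∈ lowerCentral K R 2 :=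
  lie_mem_lowerCentral le_rfl a Submodule.mem_top

lemma lcsIdeal_eq_top_mul_mul_top (i : ℕ) :
    lcsIdeal K R i = ⊤ * lowerCentral K R i * ⊤ := by
  refine le_antisymm (Submodule.span_le.2 ?_) (Submodule.mul_le.2 fun x hx b _ => ?_)
  · rintro _ ⟨a, b, l, hl, rfl⟩
    exact Submodule.mul_mem_mul (Submodule.mul_mem_mul Submodule.mem_top hl) Submodule.mem_top
  · refine Submodule.mul_induction_on hx (fun a _ l hl => ?_) (fun _ _ => ?_)
    · exact Submodule.subset_span ⟨a, b, l, hl, rfl⟩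
    · rw [add_mul]; exact add_mem

lemma isTwoSidedIdeal_lcsIdeal (i : ℕ) : IsTwoSidedIdeal (lcsIdeal K R i) := by
  rw [lcsIdeal_eq_top_mul_mul_top]; exact isTwoSidedIdeal_top_mul_mul_top _

lemma lowerCentral_le_lcsIdeal (i : ℕ) : lowerCentral K R i ≤ lcsIdeal K R i := by
  rw [lcsIdeal_eq_top_mul_mul_top]; exact le_top_mul_mul_top _

lemma mul_top_le_top_mul_sup {j : ℕ} (hj : 1 ≤ j) {C : Submodule K R}
    (hC : C ≤ lowerCentral K R j) : C * ⊤ ≤ ⊤ * C ⊔ lowerCentral K R (j + 1) :=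
  Submodule.mul_le.2 fun c hc b _ => by
    rw [show c * b = b * c + -⁅b, c⁆ by rw [Ring.lie_def]; abel]
    exact Submodule.add_mem_sup (Submodule.mul_mem_mul Submodule.mem_top hc)
      (neg_mem (lie_mem_lowerCentral hj b (hC hc)))

lemma top_mul_mul_top_mul_le {j : ℕ} (hj : 1 ≤ j) {C D : Submodule K R}
    (hC : C ≤ lowerCentral K R j) (hCD : C * D ≤ lcsIdeal K R (j + 1)) :
    (⊤ * C * ⊤) * (⊤ * D * ⊤) ≤ lcsIdeal K R (j + 1) := by
  have hM := isTwoSidedIdeal_lcsIdeal (K := K) (R := R) (j + 1)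
  have hCtD : C * ⊤ * D ≤ lcsIdeal K R (j + 1) :=
    calc C * ⊤ * D ≤ (⊤ * C ⊔ lowerCentral K R (j + 1)) * D :=
          mul_le_mul' (mul_top_le_top_mul_sup hj hC) le_rfl
      _ = ⊤ * (C * D) ⊔ lowerCentral K R (j + 1) * D := by rw [Submodule.sup_mul, mul_assoc]
      _ ≤ lcsIdeal K R (j + 1) :=
          sup_le ((mul_le_mul' le_rfl hCD).trans (hM.mul_le_left _))
            ((mul_le_mul' (lowerCentral_le_lcsIdeal _) le_rfl).trans (hM.mul_le_right _))
  calc (⊤ * C * ⊤) * (⊤ * D * ⊤) = ⊤ * (C * ⊤ * D) * ⊤ := by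
        simp only [mul_assoc, ← mul_assoc ⊤ ⊤, top_mul_top]
    _ ≤ lcsIdeal K R (j + 1) := hM.top_mul_mul_top_le hCtD

/-- Every summand has the form `p * ⁅y₁, ⁅y₂, m⁆⁆ * t`, hence lies in `M_{j+2}` if `m ∈ L_j`. -/
lemma lie_mul_lie_lie_eq (a b c d m : R) :
    ⁅a, m⁆ * ⁅b, ⁅c, d⁆⁆ =
      ⁅a * b, ⁅c, m⁆⁆ * d - a * ⁅b, ⁅c * d, m⁆⁆ + a * b * ⁅c, ⁅d, m⁆⁆ - ⁅a * b * d, ⁅c, m⁆⁆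
      + a * ⁅b, ⁅d * c, m⁆⁆ + ⁅b, ⁅a * c * d, m⁆⁆ - ⁅b * a, ⁅c, m⁆⁆ * d
      - ⁅b, ⁅a, m⁆⁆ * (c * d) - b * a * ⁅c, ⁅d, m⁆⁆ - ⁅b, ⁅a * d * c, m⁆⁆
      + ⁅b * a * d, ⁅c, m⁆⁆ + ⁅b, ⁅a, m⁆⁆ * (d * c) := by
  simp only [Ring.lie_def]
  noncomm_ring

lemma lowerCentral_mul_lowerCentral_three_le {j : ℕ} (hj : 1 ≤ j) :
    lowerCentral K R (j + 1) * lowerCentral K R 3 ≤ lcsIdeal K R (j + 2) := by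
  have hM := isTwoSidedIdeal_lcsIdeal (K := K) (R := R) (j + 2)
  have hlie : ∀ {m : R}, m ∈ lowerCentral K R j → ∀ y₁ y₂ : R,
      ⁅y₁, ⁅y₂, m⁆⁆ ∈ lcsIdeal K R (j + 2) := fun hm y₁ y₂ =>
    lowerCentral_le_lcsIdeal _
      (lie_mem_lowerCentral (by omega) y₁ (lie_mem_lowerCentral hj y₂ hm))
  rw [lowerCentral_succ hj, lowerCentral_succ (j := 2) (by norm_num),
    Submodule.span_mul_span, Submodule.span_le]
  rintro _ ⟨_, ⟨a, m, hm, rfl⟩, _, ⟨b, y, hy, rfl⟩, rfl⟩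
  change ⁅a, m⁆ * ⁅b, y⁆ ∈ lcsIdeal K R (j + 2)
  rw [lowerCentral_succ le_rfl] at hy
  induction hy using Submodule.span_induction with
  | mem y hy =>
    obtain ⟨c, d, -, rfl⟩ := hy
    rw [lie_mul_lie_lie_eq]
    repeat' first
      | exact hlie hm _ _
      | exact hM.mul_mem_left _ (hlie hm _ _)
      | exact hM.mul_mem_right (hlie hm _ _) _
      | apply add_mem | apply sub_mem
  | zero => simp [Ring.lie_def]
  | add y z _ _ hy hz =>
    convert add_mem hy hz using 1
    simp only [Ring.lie_def]; noncomm_ring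
  | smul r y _ hy =>
    convert Submodule.smul_mem _ r hy using 1
    simp only [Ring.lie_def, mul_smul_comm, smul_mul_assoc, ← smul_sub]

end LowerCentral

section Jennings

variable {K : Type*} [CommRing K] {R : Type*} [Ring R] [Algebra K R]

lemma lcsIdeal_mul_lcsIdeal_three_le {j : ℕ} (hj : 1 ≤ j) :
    lcsIdeal K R (j + 1) * lcsIdeal K R 3 ≤ lcsIdeal K R (j + 2) := by
  rw [lcsIdeal_eq_top_mul_mul_top (j + 1), lcsIdeal_eq_top_mul_mul_top 3]
  exact top_mul_mul_top_mul_le (by omega) le_rfl (lowerCentral_mul_lowerCentral_three_le hj)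

lemma lcsIdeal_three_pow_le (r : ℕ) : lcsIdeal K R 3 ^ (r + 1) ≤ lcsIdeal K R (r + 3) := by
  induction r with
  | zero => rw [pow_one]
  | succ r ih =>
    rw [pow_succ]
    exact (mul_le_mul' ih le_rfl).trans (lcsIdeal_mul_lcsIdeal_three_le (by omega))

lemma lie_mul_self_mem_lcsIdeal_three (a x : R) : ⁅a, x⁆ * ⁅a, x⁆ ∈ lcsIdeal K R 3 := by
  have hM := isTwoSidedIdeal_lcsIdeal (K := K) (R := R) 3
  have hlie : ∀ y z : R, ⁅a, ⁅y, z⁆⁆ ∈ lcsIdeal K R 3 := fun y z =>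
    lowerCentral_le_lcsIdeal _
      (lie_mem_lowerCentral (by norm_num) a (lie_mem_lowerCentral_two y z))
  rw [show ⁅a, x⁆ * ⁅a, x⁆ = ⁅a, ⁅a * x, x⁆⁆ - ⁅a, ⁅a, x⁆⁆ * x by
    simp only [Ring.lie_def]; noncomm_ring]
  exact sub_mem (hlie _ _) (hM.mul_mem_right (hlie _ _) x)

lemma lie_mul_lie_mem_lcsIdeal_three (h2 : IsUnit (2 : R)) (p q x : R) :
    ⁅p, x⁆ * ⁅q, x⁆ ∈ lcsIdeal K R 3 := by
  have hM := isTwoSidedIdeal_lcsIdeal (K := K) (R := R) 3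
  have htwice : 2 * (⁅p, x⁆ * ⁅q, x⁆) ∈ lcsIdeal K R 3 := by
    rw [show 2 * (⁅p, x⁆ * ⁅q, x⁆) = ⁅p + q, x⁆ * ⁅p + q, x⁆ - ⁅p, x⁆ * ⁅p, x⁆
        - ⁅q, x⁆ * ⁅q, x⁆ + ⁅⁅p, x⁆, ⁅q, x⁆⁆ by simp only [Ring.lie_def]; noncomm_ring]
    refine add_mem (sub_mem (sub_mem ?_ ?_) ?_) ?_
    · exact lie_mul_self_mem_lcsIdeal_three _ _
    · exact lie_mul_self_mem_lcsIdeal_three _ _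
    · exact lie_mul_self_mem_lcsIdeal_three _ _
    · exact lowerCentral_le_lcsIdeal _
        (lie_mem_lowerCentral (by norm_num) _ (lie_mem_lowerCentral_two q x))
  obtain ⟨u, hu⟩ := h2
  simpa [← hu, ← mul_assoc] using hM.mul_mem_left (↑u⁻¹ : R) htwice

variable (K) in
def adIdeal (x : R) : Submodule K R :=
  ⊤ * Submodule.span K (Set.range fun a : R => ⁅a, x⁆) * ⊤

lemma adIdeal_sq_le (h2 : IsUnit (2 : R)) (x : R) : adIdeal K x ^ 2 ≤ lcsIdeal K R 3 := by
  rw [sq, adIdeal]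
  refine top_mul_mul_top_mul_le (j := 2) (by norm_num) ?_ ?_
  · rw [Submodule.span_le]
    rintro _ ⟨a, rfl⟩
    exact lie_mem_lowerCentral_two a x
  · rw [Submodule.span_mul_span, Submodule.span_le]
    rintro _ ⟨_, ⟨p, rfl⟩, _, ⟨q, rfl⟩, rfl⟩
    exact lie_mul_lie_mem_lcsIdeal_three h2 p q x

lemma lcsIdeal_two_le_sup_adIdeal {ι : Type*} [Fintype ι] {x : ι → R}
    (hx : Algebra.adjoin K (Set.range x) = ⊤) :
    lcsIdeal K R 2 ≤ Finset.univ.sup fun i => adIdeal K (x i) := by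
  have hI := IsTwoSidedIdeal.finsetSup Finset.univ
    (J := fun i => adIdeal K (x i)) fun i _ => isTwoSidedIdeal_top_mul_mul_top _
  rw [lcsIdeal_eq_top_mul_mul_top]
  refine hI.top_mul_mul_top_le ?_
  rw [lowerCentral_succ le_rfl, Submodule.span_le]
  rintro _ ⟨a, b, -, rfl⟩
  refine hI.lie_mem_of_adjoin_eq_top hx ?_ a b
  rintro _ ⟨i, rfl⟩ c
  exact Finset.le_sup (f := fun i => adIdeal K (x i)) (Finset.mem_univ i)
    (le_top_mul_mul_top _ (Submodule.subset_span ⟨c, rfl⟩))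

lemma exists_pow_lcsIdeal_two_le_three (h2 : IsUnit (2 : R)) {ι : Type*} [Fintype ι]
    {x : ι → R} (hx : Algebra.adjoin K (Set.range x) = ⊤) :
    ∃ m, 0 < m ∧ lcsIdeal K R 2 ^ m ≤ lcsIdeal K R 3 := by
  obtain ⟨m, hm, hle⟩ := IsTwoSidedIdeal.exists_pow_finsetSup_le Finset.univ
    (isTwoSidedIdeal_lcsIdeal (K := K) 3) (fun i _ => isTwoSidedIdeal_top_mul_mul_top _)
    (fun i _ => adIdeal_sq_le h2 (x i))
  exact ⟨m, hm, (pow_le_pow_left' (lcsIdeal_two_le_sup_adIdeal hx) m).trans hle⟩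

end Jennings

theorem jennings_power_containment_general
    (K : Type*) [Field K] [CharZero K]
    (n : ℕ) (k : ℕ) (hk : 2 ≤ k) :
    ∃ m : ℕ, 1 ≤ m ∧
      lcsIdeal K (FreeAlgebra K (Fin n)) 2 ^ m ≤ lcsIdeal K (FreeAlgebra K (Fin n)) k := by
  have h2 : IsUnit (2 : FreeAlgebra K (Fin n)) := by
    simpa only [map_ofNat] using
      (IsUnit.mk0 (2 : K) two_ne_zero).map (algebraMap K (FreeAlgebra K (Fin n)))
  obtain ⟨m, hm, hm3⟩ :=
    exists_pow_lcsIdeal_two_le_three (K := K) h2 (FreeAlgebra.adjoin_range_ι K (Fin n))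
  obtain ⟨_ | r, rfl⟩ := Nat.exists_eq_add_of_le' hk
  · exact ⟨1, le_rfl, by rw [pow_one]⟩
  · refine ⟨m * (r + 1), Nat.mul_pos hm r.succ_pos, ?_⟩
    calc lcsIdeal K (FreeAlgebra K (Fin n)) 2 ^ (m * (r + 1))
        = (lcsIdeal K (FreeAlgebra K (Fin n)) 2 ^ m) ^ (r + 1) := pow_mul _ _ _
      _ ≤ lcsIdeal K (FreeAlgebra K (Fin n)) 3 ^ (r + 1) := pow_le_pow_left' hm3 _
      _ ≤ lcsIdeal K (FreeAlgebra K (Fin n)) (r + 3) := lcsIdeal_three_pow_le r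

/-- Jennings: for every `n ≥ 1` and `k ≥ 2` there exists `m ≥ 1` with
`(M_2(A_n))^m ⊆ M_k(A_n)` (powers taken as products of two-sided ideals). -/
theorem jennings_power_containment
    (K : Type*) [Field K] [CharZero K]
    (n : ℕ) (hn : 1 ≤ n) (k : ℕ) (hk : 2 ≤ k) :
    ∃ m : ℕ, 1 ≤ m ∧
      lcsIdeal K (FreeAlgebra K (Fin n)) 2 ^ m ≤ lcsIdeal K (FreeAlgebra K (Fin n)) k :=
  jennings_power_containment_general K n k hk
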